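/- Fix μ ∈ X with P({μ}) = 0, and let (μ_n) be a sequence in X with d(μ_n, μ) → 0 as n → ∞. Then the metric spatial depths converge: D(μ_n; P) → D(μ; P) as n → ∞. -/

import Mathlib

open MeasureTheory
open scoped Classical

/-- The kernel `h` of the metric spatial depth. -/
noncomputable def mh {X : Type*} [MetricSpace X] (x₁ x₂ x₃ : X) : ℝ :=
  if x₃ = x₁ ∨ x₃ = x₂ then 0
  else (dist x₁ x₃ ^ 2 + dist x₂ x₃ ^ 2 - dist x₁ x₂ ^ 2) / (dist x₁ x₃ * dist x₂ x₃)

/-- The metric spatial depth of `μ` with respect to the measure `P`. -/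
noncomputable def msDepth {X : Type*} [MetricSpace X] [MeasurableSpace X]
    (μ : X) (P : Measure X) : ℝ :=
  1 - (1 / 2) * ∫ x₁, ∫ x₂, mh x₁ x₂ μ ∂P ∂P

lemma abs_mh_le_two {X : Type*} [MetricSpace X] (x₁ x₂ x₃ : X) : |mh x₁ x₂ x₃| ≤ 2 := by
  unfold mh
  split_ifs with h
  · norm_num
  push_neg at h
  obtain ⟨h1, h2⟩ := h
  have ha : 0 < dist x₁ x₃ := dist_pos.2 (Ne.symm h1)
  have hb : 0 < dist x₂ x₃ := dist_pos.2 (Ne.symm h2)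
  have hab : 0 < dist x₁ x₃ * dist x₂ x₃ := by positivity
  rw [abs_div, abs_of_pos hab, div_le_iff₀ hab, abs_le]
  have t1 : dist x₁ x₂ ≤ dist x₁ x₃ + dist x₂ x₃ := by
    have := dist_triangle x₁ x₃ x₂; rw [dist_comm x₃ x₂] at this; linarith
  have t2 : dist x₁ x₃ ≤ dist x₁ x₂ + dist x₂ x₃ := dist_triangle x₁ x₂ x₃
  have t3 : dist x₂ x₃ ≤ dist x₁ x₂ + dist x₁ x₃ := by
    have := dist_triangle x₂ x₁ x₃; rw [dist_comm x₂ x₁] at this; linarith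
  have hc : 0 ≤ dist x₁ x₂ := dist_nonneg
  constructor <;> nlinarith [mul_nonneg (by linarith : (0:ℝ) ≤ dist x₁ x₂ + dist x₂ x₃ - dist x₁ x₃)
      (by linarith : (0:ℝ) ≤ dist x₁ x₂ + dist x₁ x₃ - dist x₂ x₃)]

lemma mh_meas {X : Type*} [MetricSpace X] [MeasurableSpace X] [BorelSpace X]
    [SecondCountableTopology X] (c : X) :
    Measurable (fun p : X × X => mh p.1 p.2 c) := by
  unfold mh
  have hd1 : Measurable fun p : X × X => dist p.1 c :=
    (continuous_fst.dist continuous_const).measurable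
  have hd2 : Measurable fun p : X × X => dist p.2 c :=
    (continuous_snd.dist continuous_const).measurable
  have hd3 : Measurable fun p : X × X => dist p.1 p.2 :=
    (continuous_fst.dist continuous_snd).measurable
  refine Measurable.ite ?_ measurable_const ?_
  · have e1 : {p : X × X | c = p.1} = Prod.fst ⁻¹' {c} := by ext p; simp [eq_comm]
    have e2 : {p : X × X | c = p.2} = Prod.snd ⁻¹' {c} := by ext p; simp [eq_comm]
    have : {p : X × X | c = p.1 ∨ c = p.2} =
        {p : X × X | c = p.1} ∪ {p : X × X | c = p.2} := rfl
    rw [this, e1, e2]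
    exact (measurable_fst (measurableSet_singleton c)).union
      (measurable_snd (measurableSet_singleton c))
  · exact (((hd1.pow_const 2).add (hd2.pow_const 2)).sub (hd3.pow_const 2)).div (hd1.mul hd2)

lemma mh_int {X : Type*} [MetricSpace X] [MeasurableSpace X] [BorelSpace X]
    [SecondCountableTopology X] (P : Measure X) [IsProbabilityMeasure P] (c : X) :
    Integrable (fun p : X × X => mh p.1 p.2 c) (P.prod P) := by
  refine Integrable.mono' (integrable_const 2) (mh_meas c).aestronglyMeasurable
    (Filter.Eventually.of_forall fun p => ?_)
  rw [Real.norm_eq_abs]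
  exact abs_mh_le_two _ _ _

theorem msDepth_continuous_in_point {X : Type*} [MetricSpace X] [CompleteSpace X]
    [SecondCountableTopology X] [MeasurableSpace X] [BorelSpace X]
    (μ : X) (P : Measure X) [IsProbabilityMeasure P] (hμ : P {μ} = 0)
    (μs : ℕ → X)
    (hconv : Filter.Tendsto (fun n => dist (μs n) μ) Filter.atTop (nhds 0)) :
    Filter.Tendsto (fun n => msDepth (μs n) P) Filter.atTop (nhds (msDepth μ P)) := by
  have hμs : Filter.Tendsto μs Filter.atTop (nhds μ) :=
    tendsto_iff_dist_tendsto_zero.2 hconv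
  -- rewrite iterated integrals as integrals over the product measure
  have key : ∀ c : X, msDepth c P = 1 - (1/2) * ∫ p : X × X, mh p.1 p.2 c ∂(P.prod P) := by
    intro c
    rw [msDepth, MeasureTheory.integral_prod _ (mh_int P c)]
  -- the null set where one coordinate equals μ
  have hN : (P.prod P) {p : X × X | p.1 = μ ∨ p.2 = μ} = 0 := by
    have hsub : {p : X × X | p.1 = μ ∨ p.2 = μ} ⊆
        ({μ} ×ˢ Set.univ) ∪ (Set.univ ×ˢ ({μ} : Set X)) := by
      rintro ⟨a, b⟩ (h | h) <;> simp_all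
    refine measure_mono_null hsub ?_
    have h1 : (P.prod P) (({μ} : Set X) ×ˢ Set.univ) = 0 := by
      rw [Measure.prod_prod, hμ, zero_mul]
    have h2 : (P.prod P) (Set.univ ×ˢ ({μ} : Set X)) = 0 := by
      rw [Measure.prod_prod, hμ, mul_zero]
    exact le_antisymm (le_trans (measure_union_le _ _) (by rw [h1, h2, add_zero])) zero_le
  -- dominated convergence on the product measure
  have hdct : Filter.Tendsto (fun n => ∫ p : X × X, mh p.1 p.2 (μs n) ∂(P.prod P))
      Filter.atTop (nhds (∫ p : X × X, mh p.1 p.2 μ ∂(P.prod P))) := by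
    refine MeasureTheory.tendsto_integral_of_dominated_convergence (fun _ => (2:ℝ))
      (fun n => (mh_meas (μs n)).aestronglyMeasurable) (integrable_const 2)
      (fun n => Filter.Eventually.of_forall fun p => by
        rw [Real.norm_eq_abs]; exact abs_mh_le_two _ _ _) ?_
    have hae : ∀ᵐ p : X × X ∂(P.prod P), ¬(p.1 = μ ∨ p.2 = μ) := by
      rw [MeasureTheory.ae_iff]
      simp only [not_not]
      exact hN
    filter_upwards [hae] with p hp
    push_neg at hp
    obtain ⟨hp1, hp2⟩ := hp
    -- eventually μs n ≠ p.1 and μs n ≠ p.2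
    have hne1 : ∀ᶠ n in Filter.atTop, μs n ≠ p.1 :=
      hμs (IsOpen.mem_nhds isOpen_compl_singleton (by simpa using Ne.symm hp1))
    have hne2 : ∀ᶠ n in Filter.atTop, μs n ≠ p.2 :=
      hμs (IsOpen.mem_nhds isOpen_compl_singleton (by simpa using Ne.symm hp2))
    have hA : Filter.Tendsto (fun n => dist p.1 (μs n)) Filter.atTop (nhds (dist p.1 μ)) :=
      Filter.Tendsto.dist tendsto_const_nhds hμs
    have hB : Filter.Tendsto (fun n => dist p.2 (μs n)) Filter.atTop (nhds (dist p.2 μ)) :=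
      Filter.Tendsto.dist tendsto_const_nhds hμs
    have ha : dist p.1 μ ≠ 0 := fun h => hp1 (dist_eq_zero.1 h)
    have hb : dist p.2 μ ≠ 0 := fun h => hp2 (dist_eq_zero.1 h)
    have hratio : Filter.Tendsto
        (fun n => (dist p.1 (μs n) ^ 2 + dist p.2 (μs n) ^ 2 - dist p.1 p.2 ^ 2) /
          (dist p.1 (μs n) * dist p.2 (μs n))) Filter.atTop
        (nhds ((dist p.1 μ ^ 2 + dist p.2 μ ^ 2 - dist p.1 p.2 ^ 2) /
          (dist p.1 μ * dist p.2 μ))) := by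
      exact Filter.Tendsto.div (((hA.pow 2).add (hB.pow 2)).sub tendsto_const_nhds)
        (hA.mul hB) (mul_ne_zero ha hb)
    have heq : ∀ᶠ n in Filter.atTop,
        (dist p.1 (μs n) ^ 2 + dist p.2 (μs n) ^ 2 - dist p.1 p.2 ^ 2) /
          (dist p.1 (μs n) * dist p.2 (μs n)) = mh p.1 p.2 (μs n) := by
      filter_upwards [hne1, hne2] with n h1 h2
      rw [mh, if_neg (by tauto)]
    have hval : mh p.1 p.2 μ = (dist p.1 μ ^ 2 + dist p.2 μ ^ 2 - dist p.1 p.2 ^ 2) /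
        (dist p.1 μ * dist p.2 μ) := by
      rw [mh, if_neg (by tauto)]
    rw [hval]
    exact hratio.congr' heq
  simp only [key]
  exact (hdct.const_mul (1/2)).const_sub 1
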